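/- Let q_1,...,q_K ∈ [δ,1] with δ > 0 and let p_k = (1/N)∑_{j=1}^N X_{k,j} where the X_{k,j} are independent Bernoulli(q_k) random variables. Then for any λ > 1, P(∏_k p_k ≥ λ ∏_k q_k) ≤ exp(−2 δ² (log λ)² N / K). -/

import Mathlib

/-!
Write `p_k = (1/N) ∑_j X_{k,j}`. Since `1 + x ≤ exp x`, the event `∏ p_k ≥ λ ∏ q_k` forces
`N log λ ≤ ∑_{k,j} (X_{k,j} / q_k - 1)`. The `KN` summands are independent, centred and take values
in an interval of length `1 / q_k ≤ 1 / δ`, so by Hoeffding's lemma each is sub-Gaussian with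
variance proxy `1 / (4 δ²)`, and Hoeffding's inequality at `ε = N log λ` gives the bound.
-/

open MeasureTheory ProbabilityTheory Finset Real

section

variable {Ω : Type*} {mΩ : MeasurableSpace Ω} {μ : Measure Ω}

lemma integral_eq_measureReal_of_eq_zero_or_eq_one {X : Ω → ℝ} (hX : Measurable X)
    (h01 : ∀ ω, X ω = 0 ∨ X ω = 1) : μ[X] = μ.real {ω | X ω = 1} := by
  have hind : X = {ω | X ω = 1}.indicator 1 := by
    ext ω
    rcases h01 ω with h | h <;> simp [Set.indicator, h]
  conv_lhs => rw [hind]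
  exact integral_indicator_one (hX (measurableSet_singleton 1))

lemma hasSubgaussianMGF_div_integral_sub_one [IsProbabilityMeasure μ] {X : Ω → ℝ}
    (hX : AEMeasurable X μ) (h01 : ∀ᵐ ω ∂μ, X ω ∈ Set.Icc 0 1) {δ : ℝ} (hδ : 0 < δ)
    (hmean : δ ≤ μ[X]) :
    HasSubgaussianMGF (fun ω ↦ X ω / μ[X] - 1) ((‖δ⁻¹‖₊ / 2) ^ 2) μ := by
  have hpos : 0 < μ[X] := hδ.trans_le hmean
  have hY : μ[fun ω ↦ X ω / μ[X]] = 1 := by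
    rw [integral_div, div_self hpos.ne']
  have hbound : ∀ᵐ ω ∂μ, X ω / μ[X] ∈ Set.Icc 0 δ⁻¹ := by
    filter_upwards [h01] with ω ⟨h0, h1⟩
    refine ⟨div_nonneg h0 hpos.le, ?_⟩
    calc X ω / μ[X] ≤ 1 / μ[X] := by gcongr
      _ ≤ δ⁻¹ := by rw [one_div]; gcongr
  simpa [hY] using hasSubgaussianMGF_of_mem_Icc (hX.div_const _) hbound

lemma hasSubgaussianMGF_div_sub_one_of_eq_zero_or_eq_one [IsProbabilityMeasure μ] {X : Ω → ℝ}
    (hX : Measurable X) (h01 : ∀ ω, X ω = 0 ∨ X ω = 1) {δ q : ℝ} (hδ : 0 < δ) (hδq : δ ≤ q)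
    (hlaw : μ {ω | X ω = 1} = ENNReal.ofReal q) :
    HasSubgaussianMGF (fun ω ↦ X ω / q - 1) ((‖δ⁻¹‖₊ / 2) ^ 2) μ := by
  have hmean : μ[X] = q := by
    rw [integral_eq_measureReal_of_eq_zero_or_eq_one hX h01, measureReal_def, hlaw,
      ENNReal.toReal_ofReal (hδ.trans_le hδq).le]
  have hIcc : ∀ᵐ ω ∂μ, X ω ∈ Set.Icc 0 1 := ae_of_all _ fun ω ↦ by
    rcases h01 ω with h | h <;> simp [h]
  simpa only [hmean] using
    hasSubgaussianMGF_div_integral_sub_one hX.aemeasurable hIcc hδ (hmean ▸ hδq)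

end

lemma log_le_sum_div_sub_one_of_mul_prod_le {ι : Type*} [Fintype ι] {p q : ι → ℝ}
    (hp : ∀ i, 0 ≤ p i) (hq : ∀ i, 0 < q i) {lam : ℝ} (hlam : 0 < lam)
    (h : lam * ∏ i, q i ≤ ∏ i, p i) : log lam ≤ ∑ i, (p i / q i - 1) := by
  have hprod : lam ≤ ∏ i, p i / q i := by
    rw [prod_div_distrib, le_div_iff₀ (prod_pos fun i _ ↦ hq i)]
    exact h
  have hexp : ∏ i, p i / q i ≤ exp (∑ i, (p i / q i - 1)) := by
    rw [exp_sum]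
    refine prod_le_prod (fun i _ ↦ div_nonneg (hp i) (hq i).le) fun i _ ↦ ?_
    linarith [add_one_le_exp (p i / q i - 1)]
  exact (log_le_iff_le_exp hlam).2 (hprod.trans hexp)

lemma natCast_mul_average_div_sub_one {N : ℕ} (f : Fin N → ℝ) (c : ℝ) :
    (N : ℝ) * ((1 / N * ∑ j, f j) / c - 1) = ∑ j, (f j / c - 1) := by
  rcases N.eq_zero_or_pos with rfl | hN
  · simp
  rw [sum_sub_distrib, ← sum_div, sum_const, card_univ, Fintype.card_fin, nsmul_eq_mul, mul_one]
  field_simp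

lemma natCast_mul_log_le_sum_sum_div_sub_one {K N : ℕ} {x : Fin K → Fin N → ℝ}
    (hx : ∀ k j, 0 ≤ x k j) {q : Fin K → ℝ} (hq : ∀ k, 0 < q k) {lam : ℝ} (hlam : 0 < lam)
    (h : lam * ∏ k, q k ≤ ∏ k, (1 / (N : ℝ)) * ∑ j, x k j) :
    N * log lam ≤ ∑ k, ∑ j, (x k j / q k - 1) := by
  have hp : ∀ k, 0 ≤ (1 / (N : ℝ)) * ∑ j, x k j := fun k ↦
    mul_nonneg (by positivity) (sum_nonneg fun j _ ↦ hx k j)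
  calc (N : ℝ) * log lam ≤ N * ∑ k, ((1 / N * ∑ j, x k j) / q k - 1) := by
        gcongr; exact log_le_sum_div_sub_one_of_mul_prod_le hp hq hlam h
    _ = ∑ k, ∑ j, (x k j / q k - 1) := by
        rw [mul_sum]
        exact sum_congr rfl fun k _ ↦ natCast_mul_average_div_sub_one _ _

lemma hoeffding_exponent_eq {K N : ℕ} {δ : ℝ} (hδ : δ ≠ 0) (L : ℝ) :
    -((N : ℝ) * L) ^ 2 / (2 * (K * N * (δ⁻¹ / 2) ^ 2)) = -2 * δ ^ 2 * L ^ 2 * N / K := by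
  rcases N.eq_zero_or_pos with rfl | hN
  · simp
  rcases K.eq_zero_or_pos with rfl | hK
  · simp
  field_simp

theorem hdr_multiplicative_error_bound_general
    {Ω : Type*} [MeasureSpace Ω] [IsProbabilityMeasure (ℙ : Measure Ω)]
    {K N : ℕ}
    {δ : ℝ} (hδ : 0 < δ) (q : Fin K → ℝ) (hq : ∀ k, q k ∈ Set.Icc δ 1)
    (X : Fin K → Fin N → Ω → ℝ)
    (hmeas : ∀ k j, Measurable (X k j))
    (hBer : ∀ k j ω, X k j ω = 0 ∨ X k j ω = 1)
    (hlaw : ∀ k j, ℙ {ω | X k j ω = 1} = ENNReal.ofReal (q k))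
    (hindep : iIndepFun (fun (p : Fin K × Fin N) => X p.1 p.2) ℙ)
    {lam : ℝ} (hlam : 1 < lam) :
    ℙ {ω | lam * ∏ k, q k ≤ ∏ k, (1 / (N : ℝ)) * ∑ j, X k j ω} ≤
      ENNReal.ofReal (Real.exp (-2 * δ^2 * (Real.log lam)^2 * N / K)) := by
  set Z : Fin K × Fin N → Ω → ℝ := fun p ω ↦ X p.1 p.2 ω / q p.1 - 1
  have hZ_indep : iIndepFun Z ℙ :=
    hindep.comp _ fun p ↦ (measurable_id.div_const _).sub_const _
  have hZ_subG : ∀ p ∈ (univ : Finset (Fin K × Fin N)),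
      HasSubgaussianMGF (Z p) ((‖δ⁻¹‖₊ / 2) ^ 2) ℙ := fun p _ ↦
    hasSubgaussianMGF_div_sub_one_of_eq_zero_or_eq_one (hmeas p.1 p.2) (hBer p.1 p.2) hδ
      (hq p.1).1 (hlaw p.1 p.2)
  have hevent : {ω | lam * ∏ k, q k ≤ ∏ k, (1 / (N : ℝ)) * ∑ j, X k j ω} ⊆
      {ω | N * log lam ≤ ∑ p, Z p ω} := fun ω hω ↦ by
    have hX_nonneg : ∀ k j, 0 ≤ X k j ω := fun k j ↦ by
      rcases hBer k j ω with h | h <;> simp [h]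
    have := natCast_mul_log_le_sum_sum_div_sub_one hX_nonneg
      (fun k ↦ hδ.trans_le (hq k).1) (by linarith) hω
    rwa [← Fintype.sum_prod_type'] at this
  have hvariance : ((∑ _p : Fin K × Fin N, (‖δ⁻¹‖₊ / 2) ^ 2 : NNReal) : ℝ) =
      K * N * (δ⁻¹ / 2) ^ 2 := by
    simp [abs_of_pos hδ]
  have hhoeffding := HasSubgaussianMGF.measure_sum_ge_le_of_iIndepFun hZ_indep hZ_subG
    (mul_nonneg (Nat.cast_nonneg N) (log_pos hlam).le)
  rw [hvariance, hoeffding_exponent_eq hδ.ne'] at hhoeffding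
  exact (measure_mono hevent).trans
    ((ENNReal.le_ofReal_iff_toReal_le (measure_ne_top _ _) (exp_pos _).le).2 hhoeffding)

theorem hdr_multiplicative_error_bound
    {Ω : Type*} [MeasureSpace Ω] [IsProbabilityMeasure (ℙ : Measure Ω)]
    {K N : ℕ} (hK : 0 < K) (hN : 0 < N)
    {δ : ℝ} (hδ : 0 < δ) (q : Fin K → ℝ) (hq : ∀ k, q k ∈ Set.Icc δ 1)
    (X : Fin K → Fin N → Ω → ℝ)
    (hmeas : ∀ k j, Measurable (X k j))
    (hBer : ∀ k j ω, X k j ω = 0 ∨ X k j ω = 1)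
    (hlaw : ∀ k j, ℙ {ω | X k j ω = 1} = ENNReal.ofReal (q k))
    (hindep : iIndepFun (fun (p : Fin K × Fin N) => X p.1 p.2) ℙ)
    {lam : ℝ} (hlam : 1 < lam) :
    ℙ {ω | lam * ∏ k, q k ≤ ∏ k, (1 / (N : ℝ)) * ∑ j, X k j ω} ≤
      ENNReal.ofReal (Real.exp (-2 * δ^2 * (Real.log lam)^2 * N / K)) :=
  hdr_multiplicative_error_bound_general hδ q hq X hmeas hBer hlaw hindep hlam
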